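/- For every nonempty finite set X and every nontrivial upper set F ⊆ 2^X, one has q(F) ≤ p_c(F) ≤ 8 · q(F) · log₂(2 ℓ_0(F)). -/

import Mathlib

/-!
The lower bound is the union bound: a cover `G` of `F` gives `μ_p(F) ≤ ∑_{S ∈ G} p^{|S|}`, while
`μ_p(F)` is strictly increasing in `p`.

For the upper bound take `r > q(F)` with `σ = 8r ≤ 1` and `m ≤ log₂ (2ℓ₀)` independent `σ`-random
sets `W₁, …, Wₘ`; their union is `(1 - (1 - σ)^m)`-random, and `1 - (1 - σ)^m ≤ mσ`. Starting from
the minimal elements of `F`, round `i` replaces every set `S` by the minimal fragments `S \ Wᵢ`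
and discards those with more than `bᵢ` elements, for the thresholds `ℓ₀/2, ℓ₀/4, …, 0`. If the
union of the `Wᵢ` is not in `F`, nothing survives the last round, so the discarded fragments cover
`F` and, `F` not being `r`-small, weigh `∑ r^{|T|} > 1/2`. But summing over `Z = W ∪ T` instead
of `W`, and using that all fragments inside `Z` lie in one member of the family, the expected
weight discarded in a round is at most `∑_{j > b} C(a, j) yʲ` with `y = r(1 - σ)/σ ≤ 1/8`, and
these bounds add up to less than `1/4`. Hence the union lies in `F` with probability more than
`1/2`, that is, `p_c(F) ≤ 1 - (1 - σ)^m ≤ 8 r log₂ (2ℓ₀)`.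
-/

open Finset

noncomputable section

/-- Product measure weight of a single subset `S` of the finite type `X`. -/
def mu {X : Type*} [Fintype X] [DecidableEq X] (p : ℝ) (S : Finset X) : ℝ :=
  p ^ S.card * (1 - p) ^ (Fintype.card X - S.card)

/-- Measure of a family of subsets. -/
def muF {X : Type*} [Fintype X] [DecidableEq X] (p : ℝ) (F : Finset (Finset X)) : ℝ :=
  ∑ S ∈ F, mu p S

/-- `F` is an upper set (increasing family) in `2^X`. -/
def IsUpperFam {X : Type*} [Fintype X] [DecidableEq X] (F : Finset (Finset X)) : Prop :=
  ∀ S ∈ F, ∀ T : Finset X, S ⊆ T → T ∈ F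

/-- `G` is a cover of `F`: every member of `F` contains a member of `G`. -/
def IsCover {X : Type*} [Fintype X] [DecidableEq X] (G F : Finset (Finset X)) : Prop :=
  ∀ S ∈ F, ∃ T ∈ G, T ⊆ S

/-- `F` is `p`-small. -/
def PSmall {X : Type*} [Fintype X] [DecidableEq X] (p : ℝ) (F : Finset (Finset X)) : Prop :=
  ∃ G : Finset (Finset X), IsCover G F ∧ ∑ T ∈ G, p ^ T.card ≤ 1 / 2

/-- Expectation threshold: the largest `p ∈ [0,1]` for which `F` is `p`-small. -/
def qThr {X : Type*} [Fintype X] [DecidableEq X] (F : Finset (Finset X)) : ℝ :=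
  sSup {p : ℝ | p ∈ Set.Icc (0 : ℝ) 1 ∧ PSmall p F}

/-- The set of minimal elements of `F` (under inclusion). -/
def minimalsF {X : Type*} [Fintype X] [DecidableEq X] (F : Finset (Finset X)) :
    Finset (Finset X) :=
  F.filter fun S => ∀ T ∈ F, T ⊆ S → T = S

/-- `ℓ₀(F)`: maximum size of a minimal element of `F`. -/
def ell0 {X : Type*} [Fintype X] [DecidableEq X] (F : Finset (Finset X)) : ℕ :=
  (minimalsF F).sup Finset.card

/-- `ℓ(F) = max (ℓ₀(F), 2)`. -/
def ell {X : Type*} [Fintype X] [DecidableEq X] (F : Finset (Finset X)) : ℕ :=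
  max (ell0 F) 2

/-- The upper set generated by a family `A`. -/
def upClos {X : Type*} [Fintype X] [DecidableEq X] (A : Finset (Finset X)) :
    Finset (Finset X) :=
  Finset.univ.filter fun T => ∃ S ∈ A, S ⊆ T

/-- The ratio `r_{A,B}(p) = (μ_p(A)/μ_p(⟨A⟩)) / μ_p(B)`. -/
def rAB {X : Type*} [Fintype X] [DecidableEq X] (A B : Finset (Finset X)) (p : ℝ) : ℝ :=
  (muF p A / muF p (upClos A)) / muF p B

end

variable {X : Type*} [Fintype X] [DecidableEq X]

lemma mu_nonneg {p : ℝ} (h0 : 0 ≤ p) (h1 : p ≤ 1) (S : Finset X) : 0 ≤ mu p S :=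
  mul_nonneg (pow_nonneg h0 _) (pow_nonneg (sub_nonneg.2 h1) _)

lemma sum_mu_univ (p : ℝ) : ∑ S : Finset X, mu p S = 1 := by
  simpa [mu, ← powerset_univ] using sum_pow_mul_eq_add_pow p (1 - p) (univ : Finset X)

lemma sum_mu_Icc (p : ℝ) {L U : Finset X} (h : L ⊆ U) :
    ∑ S ∈ Icc L U, mu p S = p ^ #L * (1 - p) ^ (Fintype.card X - #U) := by
  have hU : #U ≤ Fintype.card X := card_le_univ U
  have hLU : #L ≤ #U := card_le_card h
  rw [Icc_eq_image_powerset h, sum_image (fun A hA B hB hAB => ?_)]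
  · have key : ∀ A ∈ (U \ L).powerset, mu p (L ∪ A) =
        p ^ #L * (1 - p) ^ (Fintype.card X - #U) * (p ^ #A * (1 - p) ^ (#(U \ L) - #A)) := by
      intro A hA
      have hA' := mem_powerset.1 hA
      have hAc : #A ≤ #(U \ L) := card_le_card hA'
      rw [card_sdiff_of_subset h] at hAc ⊢
      rw [mu, card_union_of_disjoint (disjoint_of_subset_right hA' disjoint_sdiff),
        show Fintype.card X - (#L + #A) = (Fintype.card X - #U) + (#U - #L - #A) by omega]
      ring
    rw [sum_congr rfl key, ← mul_sum, sum_pow_mul_eq_add_pow, add_sub_cancel, one_pow, mul_one]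
  · have hdisj : ∀ C ∈ ((U \ L).powerset : Set (Finset X)), (L ∪ C) \ L = C := fun C hC =>
      union_sdiff_cancel_left (disjoint_of_subset_right (mem_powerset.1 hC) disjoint_sdiff)
    simpa [hdisj A hA, hdisj B hB] using congrArg (· \ L) hAB

lemma sum_mu_supersets (p : ℝ) (T : Finset X) : ∑ S with T ⊆ S, mu p S = p ^ #T := by
  rw [show univ.filter (T ⊆ ·) = Icc T univ by ext; simp, sum_mu_Icc p (subset_univ T)]
  simp

lemma filter_union_eq_Icc {A U : Finset X} (h : A ⊆ U) :
    univ.filter (fun B => A ∪ B = U) = Icc (U \ A) U := by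
  ext B
  simp only [mem_filter, mem_univ, true_and, mem_Icc]
  constructor
  · rintro rfl
    exact ⟨sdiff_le_iff.2 le_rfl, subset_union_right⟩
  · rintro ⟨h1, h2⟩
    exact subset_antisymm (union_subset h h2) fun x hx => by
      by_cases hxA : x ∈ A
      · exact mem_union_left _ hxA
      · exact mem_union_right _ (h1 (mem_sdiff.2 ⟨hx, hxA⟩))

lemma sum_mu_mul_sum_mu_union_eq (p σ : ℝ) (U : Finset X) :
    ∑ A, mu p A * ∑ B with A ∪ B = U, mu σ B = mu (p + (1 - p) * σ) U := by
  have hU : #U ≤ Fintype.card X := card_le_univ U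
  rw [← sum_subset (subset_univ U.powerset) fun A _ hA => ?_]
  · have key : ∀ A ∈ U.powerset, mu p A * ∑ B with A ∪ B = U, mu σ B =
        ((1 - p) * (1 - σ)) ^ (Fintype.card X - #U) * (p ^ #A * ((1 - p) * σ) ^ (#U - #A)) := by
      intro A hA
      have hAU := mem_powerset.1 hA
      have hAc : #A ≤ #U := card_le_card hAU
      rw [filter_union_eq_Icc hAU, sum_mu_Icc σ sdiff_subset, card_sdiff_of_subset hAU, mu,
        show Fintype.card X - #A = (#U - #A) + (Fintype.card X - #U) by omega, mul_pow, mul_pow]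
      ring
    rw [sum_congr rfl key, ← mul_sum, sum_pow_mul_eq_add_pow, mu, mul_comm]
    congr 2
    ring
  · rw [filter_false_of_mem fun B _ (hB : A ∪ B = U) =>
      hA (mem_powerset.2 (hB ▸ subset_union_left)), sum_empty, mul_zero]

lemma sum_mu_mul_sum_mu_mul_union (p σ : ℝ) (φ : Finset X → ℝ) :
    ∑ A, mu p A * ∑ B, mu σ B * φ (A ∪ B) = ∑ U, mu (p + (1 - p) * σ) U * φ U := by
  have fiber : ∀ A : Finset X, ∑ B, mu σ B * φ (A ∪ B) =
      ∑ U, (∑ B with A ∪ B = U, mu σ B) * φ U := fun A => by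
    rw [← sum_fiberwise univ (A ∪ ·)]
    exact sum_congr rfl fun U _ => by
      rw [sum_mul]; exact sum_congr rfl fun B hB => by rw [(mem_filter.1 hB).2]
  simp_rw [fiber, mul_sum, ← mul_assoc]
  rw [sum_comm]
  simp_rw [← sum_mul, sum_mu_mul_sum_mu_union_eq]

lemma muF_le_sum_pow_of_isCover {p : ℝ} (h0 : 0 ≤ p) (h1 : p ≤ 1) {G F : Finset (Finset X)}
    (hG : IsCover G F) : muF p F ≤ ∑ T ∈ G, p ^ #T := by
  have hmu := mu_nonneg (X := X) h0 h1
  calc muF p F ≤ ∑ S ∈ F, ∑ T ∈ G with T ⊆ S, mu p S := sum_le_sum fun S hS => by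
        obtain ⟨T, hT, hTS⟩ := hG S hS
        exact single_le_sum (f := fun _ => mu p S) (fun _ _ => hmu S) (mem_filter.2 ⟨hT, hTS⟩)
    _ ≤ ∑ S, ∑ T ∈ G with T ⊆ S, mu p S :=
        sum_le_sum_of_subset_of_nonneg (subset_univ F) fun S _ _ => sum_nonneg fun _ _ => hmu S
    _ = ∑ T ∈ G, ∑ S with T ⊆ S, mu p S := by
        simp_rw [sum_filter]
        exact sum_comm
    _ = ∑ T ∈ G, p ^ #T := sum_congr rfl fun T _ => sum_mu_supersets p T

lemma sum_mu_mul_ite_mem (p : ℝ) (F : Finset (Finset X)) :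
    ∑ U, mu p U * (if U ∈ F then 1 else 0) = muF p F := by
  simp [muF, mul_ite, sum_ite_mem]

lemma muF_lt_muF_of_lt {F : Finset (Finset X)} (hup : IsUpperFam F) (hempty : ∅ ∉ F)
    (huniv : univ ∈ F) {p p' : ℝ} (h0 : 0 ≤ p) (hpp' : p < p') (h1 : p' ≤ 1) :
    muF p F < muF p' F := by
  have hp1 : p < 1 := hpp'.trans_le h1
  -- A `p'`-random set is the union of independent `p`- and `σ`-random sets `A` and `B`; adding `B`
  -- can only help an upper set, and it helps strictly for `A = ∅`, `B = univ`.
  obtain ⟨σ, hσ0, hσ1, rfl⟩ : ∃ σ, 0 < σ ∧ σ ≤ 1 ∧ p' = p + (1 - p) * σ :=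
    ⟨(p' - p) / (1 - p), div_pos (by linarith) (by linarith),
      (div_le_one (by linarith)).2 (by linarith), by field_simp [(sub_pos.2 hp1).ne']; ring⟩
  set ι : Finset X → ℝ := fun U => if U ∈ F then 1 else 0
  have hι : ∀ A B, ι A ≤ ι (A ∪ B) := fun A B => by
    by_cases hA : A ∈ F
    · simp [ι, hA, hup A hA _ subset_union_left]
    · by_cases hAB : A ∪ B ∈ F <;> simp [ι, hA, hAB]
  have hle : ∀ A, ι A ≤ ∑ B, mu σ B * ι (A ∪ B) := fun A =>
    calc ι A = ∑ B, mu σ B * ι A := by rw [← sum_mul, sum_mu_univ, one_mul]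
      _ ≤ ∑ B, mu σ B * ι (A ∪ B) :=
        sum_le_sum fun B _ => mul_le_mul_of_nonneg_left (hι A B) (mu_nonneg hσ0.le hσ1 B)
  have hlt : ι ∅ < ∑ B, mu σ B * ι (∅ ∪ B) :=
    calc ι ∅ = 0 := if_neg hempty
      _ < mu σ univ * ι (∅ ∪ univ) := by simp [ι, mu, huniv, hσ0]
      _ ≤ ∑ B, mu σ B * ι (∅ ∪ B) :=
        single_le_sum (f := fun B => mu σ B * ι (∅ ∪ B))
          (fun B _ => mul_nonneg (mu_nonneg hσ0.le hσ1 B) (by simp only [ι]; split_ifs <;> simp))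
          (mem_univ _)
  rw [← sum_mu_mul_ite_mem, ← sum_mu_mul_ite_mem, ← sum_mu_mul_sum_mu_mul_union]
  refine sum_lt_sum (fun A _ => mul_le_mul_of_nonneg_left (hle A) (mu_nonneg h0 hp1.le A))
    ⟨∅, mem_univ _, mul_lt_mul_of_pos_left hlt ?_⟩
  simp [mu, hp1]

/-- The expectation of `f [W₁, …, Wₘ]` for independent `σ`-random subsets `Wᵢ` of `X`. -/
def expectRounds (σ : ℝ) : ℕ → (List (Finset X) → ℝ) → ℝ
  | 0, f => f []
  | m + 1, f => ∑ W, mu σ W * expectRounds σ m fun ws => f (W :: ws)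

lemma expectRounds_mono {σ : ℝ} (h0 : 0 ≤ σ) (h1 : σ ≤ 1) {m : ℕ}
    {f g : List (Finset X) → ℝ} (h : ∀ ws, ws.length = m → f ws ≤ g ws) :
    expectRounds σ m f ≤ expectRounds σ m g := by
  induction m generalizing f g with
  | zero => exact h [] rfl
  | succ m ih =>
    exact sum_le_sum fun W _ => mul_le_mul_of_nonneg_left
      (ih fun ws hws => h (W :: ws) (by simp [hws])) (mu_nonneg h0 h1 W)

lemma expectRounds_affine (σ c d : ℝ) (m : ℕ) (f : List (Finset X) → ℝ) :
    expectRounds σ m (fun ws => c + d * f ws) = c + d * expectRounds σ m f := by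
  induction m generalizing f with
  | zero => rfl
  | succ m ih =>
    simp only [expectRounds, ih, mul_add, sum_add_distrib, ← sum_mul, sum_mu_univ, one_mul,
      mul_sum]
    congr 1
    exact sum_congr rfl fun W _ => by ring

lemma expectRounds_union (σ : ℝ) (m : ℕ) (φ : Finset X → ℝ) :
    expectRounds σ m (fun ws => φ (ws.foldr (· ∪ ·) ∅)) =
      ∑ U, mu (1 - (1 - σ) ^ m) U * φ U := by
  induction m generalizing φ with
  | zero =>
    rw [sum_eq_single_of_mem ∅ (mem_univ _) fun U _ hU => by simp [mu, hU]]
    simp [expectRounds, mu]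
  | succ m ih =>
    simp only [expectRounds, List.foldr_cons]
    simp only [fun W => ih fun V => φ (W ∪ V)]
    rw [sum_mu_mul_sum_mu_mul_union,
      show σ + (1 - σ) * (1 - (1 - σ) ^ m) = 1 - (1 - σ) ^ (m + 1) by ring]

lemma exists_mem_minimalsF_subset {H : Finset (Finset X)} {S : Finset X} (hS : S ∈ H) :
    ∃ T ∈ minimalsF H, T ⊆ S := by
  obtain ⟨T, hTS, hT⟩ := exists_minimal_le_of_wellFoundedLT (· ∈ H) S hS
  exact ⟨T, mem_filter.2 ⟨hT.prop, fun T' hT' h => hT.eq_of_le hT' h⟩, hTS⟩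

def fragments (M : Finset (Finset X)) (W : Finset X) : Finset (Finset X) :=
  minimalsF (univ.filter fun T => ∃ S ∈ M, S ⊆ T ∪ W)

section Fragments

variable {M : Finset (Finset X)} {S T W : Finset X}

lemma exists_subset_union_of_mem_fragments (hT : T ∈ fragments M W) : ∃ S ∈ M, S ⊆ T ∪ W :=
  (mem_filter.1 (mem_filter.1 hT).1).2

lemma eq_sdiff_of_mem_fragments (hT : T ∈ fragments M W) (hS : S ∈ M) (hST : S ⊆ T ∪ W) :
    T = S \ W := by
  refine ((mem_filter.1 hT).2 (S \ W) (mem_filter.2 ⟨mem_univ _, S, hS, ?_⟩) ?_).symm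
  · rw [sdiff_union_self_eq_union]
    exact subset_union_left
  · rw [union_comm] at hST
    exact sdiff_le_iff.2 hST

lemma exists_superset_of_mem_fragments (hT : T ∈ fragments M W) : ∃ S ∈ M, T ⊆ S := by
  obtain ⟨S, hS, hST⟩ := exists_subset_union_of_mem_fragments hT
  exact ⟨S, hS, eq_sdiff_of_mem_fragments hT hS hST ▸ sdiff_subset⟩

lemma disjoint_of_mem_fragments (hT : T ∈ fragments M W) : Disjoint T W := by
  obtain ⟨S, hS, hST⟩ := exists_subset_union_of_mem_fragments hT
  exact eq_sdiff_of_mem_fragments hT hS hST ▸ sdiff_disjoint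

lemma exists_mem_fragments_subset (hS : S ∈ M) (W : Finset X) :
    ∃ T ∈ fragments M W, T ⊆ S \ W :=
  exists_mem_minimalsF_subset (mem_filter.2 ⟨mem_univ _, S, hS, by simp⟩)

end Fragments

/- Round `i` replaces the family by the minimal fragments of its members with respect to `Wᵢ`,
and discards those with more than `bᵢ` elements. -/
def survivors : Finset (Finset X) → List ℕ → List (Finset X) → Finset (Finset X)
  | M, b :: bs, W :: ws => survivors ((fragments M W).filter (#· ≤ b)) bs ws
  | M, _, _ => M

def discarded : Finset (Finset X) → List ℕ → List (Finset X) → Finset (Finset X)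
  | M, b :: bs, W :: ws =>
      (fragments M W).filter (b < #·) ∪ discarded ((fragments M W).filter (#· ≤ b)) bs ws
  | _, _, _ => ∅

section Rounds

variable {M : Finset (Finset X)} {bs : List ℕ} {ws : List (Finset X)} {T : Finset X}

lemma exists_subset_union_of_mem_survivors (hT : T ∈ survivors M bs ws) :
    ∃ S ∈ M, S ⊆ T ∪ ws.foldr (· ∪ ·) ∅ := by
  induction bs generalizing M ws with
  | nil => exact ⟨T, by simpa [survivors] using hT, subset_union_left⟩
  | cons b bs ih =>
    cases ws with
    | nil => exact ⟨T, by simpa [survivors] using hT, subset_union_left⟩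
    | cons W ws =>
      obtain ⟨S₁, hS₁, hS₁T⟩ := ih hT
      obtain ⟨S, hS, hSS₁⟩ := exists_subset_union_of_mem_fragments (mem_filter.1 hS₁).1
      refine ⟨S, hS, hSS₁.trans (union_subset ?_ ?_)⟩
      · exact hS₁T.trans (union_subset_union_right subset_union_right)
      · exact subset_union_left.trans subset_union_right

lemma card_le_of_mem_survivors_of_forall {c : ℕ} (hM : ∀ S ∈ M, #S ≤ c)
    (hT : T ∈ survivors M bs ws) : #T ≤ c := by
  induction bs generalizing M ws with
  | nil => exact hM T (by simpa [survivors] using hT)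
  | cons b bs ih =>
    cases ws with
    | nil => exact hM T (by simpa [survivors] using hT)
    | cons W ws =>
      refine ih (fun S' hS' => ?_) hT
      obtain ⟨S, hS, hS'S⟩ := exists_superset_of_mem_fragments (mem_filter.1 hS').1
      exact (card_le_card hS'S).trans (hM S hS)

lemma card_le_of_mem_survivors {b : ℕ} (hlen : ws.length = bs.length) (hb : b ∈ bs)
    (hT : T ∈ survivors M bs ws) : #T ≤ b := by
  induction bs generalizing M ws with
  | nil => simp at hb
  | cons b' bs ih =>
    cases ws with
    | nil => simp at hlen
    | cons W ws =>
      rcases List.mem_cons.1 hb with rfl | hb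
      · exact card_le_of_mem_survivors_of_forall (fun S hS => (mem_filter.1 hS).2) hT
      · exact ih (by simpa using hlen) hb hT

lemma exists_subset_of_mem_survivors_or_discarded {S : Finset X} (hS : S ∈ M) :
    (∃ T ∈ survivors M bs ws, T ⊆ S) ∨ ∃ T ∈ discarded M bs ws, T ⊆ S := by
  induction bs generalizing M ws S with
  | nil => exact Or.inl ⟨S, by simpa [survivors] using hS, subset_rfl⟩
  | cons b bs ih =>
    cases ws with
    | nil => exact Or.inl ⟨S, by simpa [survivors] using hS, subset_rfl⟩
    | cons W ws =>
      obtain ⟨T, hT, hTS⟩ := exists_mem_fragments_subset hS W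
      replace hTS := hTS.trans sdiff_subset
      by_cases hb : #T ≤ b
      · have hT' : T ∈ (fragments M W).filter (#· ≤ b) := mem_filter.2 ⟨hT, hb⟩
        rcases ih hT' with ⟨T', hT', h⟩ | ⟨T', hT', h⟩
        · exact Or.inl ⟨T', hT', h.trans hTS⟩
        · exact Or.inr ⟨T', mem_union_right _ hT', h.trans hTS⟩
      · exact Or.inr ⟨T, mem_union_left _ (mem_filter.2 ⟨hT, not_le.1 hb⟩), hTS⟩

lemma isCover_discarded {F : Finset (Finset X)} (hup : IsUpperFam F)
    (hlen : ws.length = bs.length) (h0 : 0 ∈ bs) (hU : ws.foldr (· ∪ ·) ∅ ∉ F) :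
    IsCover (discarded (minimalsF F) bs ws) F := by
  intro S hS
  obtain ⟨S₀, hS₀, hS₀S⟩ := exists_mem_minimalsF_subset hS
  rcases exists_subset_of_mem_survivors_or_discarded hS₀ (bs := bs) (ws := ws) with
    ⟨T, hT, -⟩ | ⟨T, hT, hTS₀⟩
  · obtain ⟨S', hS', hS'T⟩ := exists_subset_union_of_mem_survivors hT
    rw [card_eq_zero.1 (Nat.le_zero.1 (card_le_of_mem_survivors hlen h0 hT)), empty_union]
      at hS'T
    exact absurd (hup S' (mem_filter.1 hS').1 _ hS'T) hU
  · exact ⟨T, hT, hTS₀.trans hS₀S⟩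

end Rounds

lemma mu_sdiff_mul_pow (σ : ℝ) {T Z : Finset X} (h : T ⊆ Z) :
    mu σ (Z \ T) * σ ^ #T = mu σ Z * (1 - σ) ^ #T := by
  have hTZ : #T ≤ #Z := card_le_card h
  have hZ : #Z ≤ Fintype.card X := card_le_univ Z
  rw [mu, mu, card_sdiff_of_subset h,
    show Fintype.card X - (#Z - #T) = (Fintype.card X - #Z) + #T by omega]
  nth_rw 3 [show #Z = (#Z - #T) + #T by omega]
  ring

lemma sum_powerset_filter_card_lt_le {α : Type*} {S : Finset α} {a : ℕ} (hS : #S ≤ a) (b : ℕ)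
    {y : ℝ} (hy : 0 ≤ y) :
    ∑ T ∈ S.powerset with b < #T, y ^ #T ≤ ∑ j ∈ Icc (b + 1) a, (a.choose j : ℝ) * y ^ j := by
  have hIcc : Icc (b + 1) a = (range (a + 1)).filter (b < ·) := by
    ext j; simp only [mem_Icc, mem_filter, mem_range]; omega
  rw [sum_filter, sum_powerset_apply_card (fun j => if b < j then y ^ j else 0), hIcc,
    sum_filter]
  refine (sum_le_sum fun j _ => ?_).trans
    (sum_le_sum_of_subset_of_nonneg (range_subset_range.2 (by omega)) fun j _ _ => ?_)
  · rw [nsmul_eq_mul, mul_ite, mul_zero]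
    split_ifs
    · exact mul_le_mul_of_nonneg_right (by exact_mod_cast Nat.choose_le_choose j hS)
        (pow_nonneg hy j)
    · rfl
  · split_ifs <;> positivity

/-- Reindex the pairs `(W, T)` by `(W ∪ T, T)`, which is injective since `T` and `W` are
disjoint. -/
lemma sum_mu_mul_sum_large_fragments_eq (σ r : ℝ) (M : Finset (Finset X)) (b : ℕ) :
    ∑ W, mu σ W * ∑ T ∈ (fragments M W).filter (b < #·), r ^ #T =
      ∑ Z, ∑ T ∈ Z.powerset with b < #T ∧ T ∈ fragments M (Z \ T), mu σ (Z \ T) * r ^ #T := by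
  simp_rw [mul_sum]
  rw [sum_sigma', sum_sigma']
  refine sum_nbij' (fun x => ⟨x.1 ∪ x.2, x.2⟩) (fun y => ⟨y.1 \ y.2, y.2⟩) ?_ ?_ ?_ ?_ ?_
  all_goals simp only [mem_sigma, mem_univ, true_and, mem_filter, mem_powerset, Sigma.forall]
  · intro W T ⟨hT, hb⟩
    have hTW := disjoint_of_mem_fragments hT
    refine ⟨subset_union_right, hb, ?_⟩
    rwa [union_sdiff_cancel_right hTW.symm]
  · intro Z T ⟨_, hb, hT⟩
    exact ⟨hT, hb⟩
  · intro W T ⟨hT, _⟩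
    rw [union_sdiff_cancel_right (disjoint_of_mem_fragments hT).symm]
  · intro Z T ⟨hTZ, _⟩
    rw [sdiff_union_of_subset hTZ]
  · intro W T ⟨hT, _⟩
    rw [union_sdiff_cancel_right (disjoint_of_mem_fragments hT).symm]

section RoundBound

variable {M : Finset (Finset X)} {σ r : ℝ} {a b : ℕ}

lemma sum_large_fragments_le (hM : ∀ S ∈ M, #S ≤ a) (hσ0 : 0 < σ) (hσ1 : σ ≤ 1) (hr : 0 ≤ r)
    (Z : Finset X) :
    ∑ T ∈ Z.powerset with b < #T ∧ T ∈ fragments M (Z \ T), mu σ (Z \ T) * r ^ #T ≤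
      mu σ Z * ∑ j ∈ Icc (b + 1) a, (a.choose j : ℝ) * (r * (1 - σ) / σ) ^ j := by
  have hmuZ := mu_nonneg hσ0.le hσ1 Z
  rcases (Z.powerset.filter fun T => b < #T ∧ T ∈ fragments M (Z \ T)).eq_empty_or_nonempty
    with hempty | ⟨T₀, hT₀⟩
  · rw [hempty, sum_empty]
    exact mul_nonneg hmuZ (sum_nonneg fun j _ => by positivity)
  obtain ⟨hT₀Z, -, hT₀⟩ := by simpa only [mem_filter, mem_powerset] using hT₀
  obtain ⟨S₀, hS₀, hS₀T₀⟩ := exists_subset_union_of_mem_fragments hT₀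
  rw [union_sdiff_of_subset hT₀Z] at hS₀T₀
  have hsub : Z.powerset.filter (fun T => b < #T ∧ T ∈ fragments M (Z \ T)) ⊆
      S₀.powerset.filter (b < #·) := fun T hT => by
    obtain ⟨hTZ, hb, hT⟩ := by simpa only [mem_filter, mem_powerset] using hT
    refine mem_filter.2 ⟨mem_powerset.2 ?_, hb⟩
    rw [eq_sdiff_of_mem_fragments hT hS₀ (by rwa [union_sdiff_of_subset hTZ])]
    exact sdiff_subset
  have hterm : ∀ T ∈ S₀.powerset.filter (b < #·),
      mu σ (Z \ T) * r ^ #T = mu σ Z * (r * (1 - σ) / σ) ^ #T := fun T hT => by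
    have hTZ := (mem_powerset.1 (mem_filter.1 hT).1).trans hS₀T₀
    have hσT : σ ^ #T ≠ 0 := pow_ne_zero _ hσ0.ne'
    rw [← mul_left_inj' hσT, mul_right_comm, mu_sdiff_mul_pow σ hTZ, div_pow, mul_pow]
    field_simp
  calc _ ≤ ∑ T ∈ S₀.powerset with b < #T, mu σ (Z \ T) * r ^ #T :=
        sum_le_sum_of_subset_of_nonneg hsub fun T _ _ =>
          mul_nonneg (mu_nonneg hσ0.le hσ1 _) (pow_nonneg hr _)
    _ = mu σ Z * ∑ T ∈ S₀.powerset with b < #T, (r * (1 - σ) / σ) ^ #T := by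
        rw [sum_congr rfl hterm, mul_sum]
    _ ≤ _ := mul_le_mul_of_nonneg_left
        (sum_powerset_filter_card_lt_le (hM S₀ hS₀) b
          (div_nonneg (mul_nonneg hr (sub_nonneg.2 hσ1)) hσ0.le)) hmuZ

lemma sum_mu_mul_sum_large_fragments_le (hM : ∀ S ∈ M, #S ≤ a) (hσ0 : 0 < σ) (hσ1 : σ ≤ 1)
    (hr : 0 ≤ r) :
    ∑ W, mu σ W * ∑ T ∈ (fragments M W).filter (b < #·), r ^ #T ≤
      ∑ j ∈ Icc (b + 1) a, (a.choose j : ℝ) * (r * (1 - σ) / σ) ^ j := by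
  rw [sum_mu_mul_sum_large_fragments_eq]
  refine (sum_le_sum fun Z _ => sum_large_fragments_le hM hσ0 hσ1 hr Z).trans ?_
  rw [← sum_mul, sum_mu_univ, one_mul]

end RoundBound

lemma four_mul_choose_le {b : ℕ} (hb : 1 ≤ b) : 4 * (2 * b + 1).choose (b + 1) ≤ 3 * 4 ^ b := by
  induction b, hb using Nat.le_induction with
  | base => decide
  | succ b _ ih =>
    have hpascal : (2 * b + 3).choose (b + 2) =
        (2 * b + 2).choose (b + 1) + (2 * b + 2).choose (b + 2) :=
      Nat.choose_succ_succ' _ _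
    have hmiddle : (2 * b + 2).choose (b + 2) ≤ (2 * b + 2).choose (b + 1) := by
      simpa [show (2 * b + 2) / 2 = b + 1 by omega] using Nat.choose_le_middle (b + 2) (2 * b + 2)
    have hdouble : (2 * b + 2).choose (b + 1) = 2 * (2 * b + 1).choose (b + 1) := by
      rw [Nat.choose_succ_succ', ← Nat.choose_symm_half]
      ring
    rw [show 2 * (b + 1) + 1 = 2 * b + 3 by ring, show b + 1 + 1 = b + 2 from rfl, pow_succ]
    omega

lemma sum_Icc_choose_mul_pow_le {y : ℝ} (hy0 : 0 ≤ y) (hy : y ≤ 1 / 8) {a : ℕ} (ha : 2 ≤ a) :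
    ∑ j ∈ Icc (a / 2 + 1) a, (a.choose j : ℝ) * y ^ j ≤ 3 / 28 * (1 / 2) ^ (a / 2) := by
  set b := a / 2
  have hb : 1 ≤ b := by omega
  have hchoose : ∀ j, (a.choose j : ℝ) ≤ 3 / 4 * 4 ^ b := fun j => by
    have h1 : a.choose j ≤ (2 * b + 1).choose (b + 1) := by
      rw [Nat.choose_symm_half]
      simpa [show (2 * b + 1) / 2 = b by omega] using
        (Nat.choose_le_choose j (show a ≤ 2 * b + 1 by omega)).trans
          (Nat.choose_le_middle j (2 * b + 1))
    have h2 : ((4 * (2 * b + 1).choose (b + 1) : ℕ) : ℝ) ≤ ((3 * 4 ^ b : ℕ) : ℝ) := by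
      exact_mod_cast four_mul_choose_le hb
    push_cast at h2
    have h1' : (a.choose j : ℝ) ≤ (2 * b + 1).choose (b + 1) := by exact_mod_cast h1
    linarith
  have hgeom : ∑ j ∈ Icc (b + 1) a, y ^ j ≤ (1 / 8) ^ (b + 1) / (7 / 8) := by
    rw [← Finset.Ico_add_one_right_eq_Icc]
    refine (geom_sum_Ico_le_of_lt_one hy0 (by linarith)).trans ?_
    exact div_le_div₀ (by positivity) (pow_le_pow_left₀ hy0 hy _) (by norm_num) (by linarith)
  calc ∑ j ∈ Icc (b + 1) a, (a.choose j : ℝ) * y ^ j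
      ≤ ∑ j ∈ Icc (b + 1) a, 3 / 4 * 4 ^ b * y ^ j :=
        sum_le_sum fun j _ => mul_le_mul_of_nonneg_right (hchoose j) (pow_nonneg hy0 j)
    _ ≤ 3 / 4 * 4 ^ b * ((1 / 8) ^ (b + 1) / (7 / 8)) := by
        rw [← mul_sum]
        exact mul_le_mul_of_nonneg_left hgeom (by positivity)
    _ = 3 / 28 * (1 / 2) ^ b := by
        rw [pow_succ, show (1 / 2 : ℝ) = 4 * (1 / 8) by norm_num, mul_pow]
        ring

/-- A bound for the expected weight discarded by the rounds `a / 2, a / 4, …, 0`: the round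
with threshold `0` costs at most `1 / 8`, a round with threshold `b ≥ 1` at most `3/28 · 2⁻ᵇ`. -/
noncomputable def budget (a : ℕ) : ℝ :=
  if a = 0 then 0 else 1 / 8 + 3 / 28 * (1 - (1 / 2) ^ (a / 2))

lemma budget_le (a : ℕ) : budget a ≤ 13 / 56 := by
  unfold budget
  split_ifs
  · norm_num
  · have : (0 : ℝ) ≤ (1 / 2) ^ (a / 2) := by positivity
    linarith

lemma sum_Icc_choose_mul_pow_add_budget_le {y : ℝ} (hy0 : 0 ≤ y) (hy : y ≤ 1 / 8) {a : ℕ}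
    (ha : a ≠ 0) :
    ∑ j ∈ Icc (a / 2 + 1) a, (a.choose j : ℝ) * y ^ j + budget (a / 2) ≤ budget a := by
  rcases eq_or_ne a 1 with rfl | ha1
  · simpa [budget] using hy
  have htail := sum_Icc_choose_mul_pow_le hy0 hy (show 2 ≤ a by omega)
  have hhalf : 2 * (1 / 2 : ℝ) ^ (a / 2) ≤ (1 / 2) ^ (a / 2 / 2) := by
    rw [show a / 2 = (a / 2 - 1) + 1 by omega, pow_succ]
    have := pow_le_pow_of_le_one (by norm_num : (0 : ℝ) ≤ 1 / 2) (by norm_num)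
      (show (a / 2 - 1 + 1) / 2 ≤ a / 2 - 1 by omega)
    linarith
  simp only [budget, if_neg ha, if_neg (show a / 2 ≠ 0 by omega)]
  linarith

def halvings : ℕ → List ℕ
  | 0 => []
  | a + 1 => (a + 1) / 2 :: halvings ((a + 1) / 2)

lemma halvings_of_ne_zero {a : ℕ} (ha : a ≠ 0) : halvings a = a / 2 :: halvings (a / 2) := by
  obtain ⟨a, rfl⟩ := Nat.exists_eq_succ_of_ne_zero ha
  rw [halvings]

lemma zero_mem_halvings {a : ℕ} (ha : a ≠ 0) : 0 ∈ halvings a := by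
  induction a using Nat.strong_induction_on with
  | _ a ih =>
    rw [halvings_of_ne_zero ha, List.mem_cons]
    rcases eq_or_ne (a / 2) 0 with h | h
    · exact Or.inl h.symm
    · exact Or.inr (ih _ (Nat.div_lt_self (Nat.pos_of_ne_zero ha) one_lt_two) h)

lemma two_pow_length_halvings_le {a : ℕ} (ha : a ≠ 0) : 2 ^ (halvings a).length ≤ 2 * a := by
  induction a using Nat.strong_induction_on with
  | _ a ih =>
    rw [halvings_of_ne_zero ha, List.length_cons, pow_succ]
    rcases eq_or_ne (a / 2) 0 with h | h
    · rw [h, halvings, List.length_nil, pow_zero]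
      omega
    · have := ih _ (Nat.div_lt_self (Nat.pos_of_ne_zero ha) one_lt_two) h
      omega

lemma expectRounds_sum_discarded_cons_le {σ r : ℝ} (hσ0 : 0 ≤ σ) (hσ1 : σ ≤ 1) (hr : 0 ≤ r)
    (M : Finset (Finset X)) (b : ℕ) (bs : List ℕ) (W : Finset X) :
    expectRounds σ bs.length (fun ws => ∑ T ∈ discarded M (b :: bs) (W :: ws), r ^ #T) ≤
      ∑ T ∈ (fragments M W).filter (b < #·), r ^ #T + expectRounds σ bs.length
        (fun ws => ∑ T ∈ discarded ((fragments M W).filter (#· ≤ b)) bs ws, r ^ #T) := by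
  have h := expectRounds_affine σ (∑ T ∈ (fragments M W).filter (b < #·), r ^ #T) 1 bs.length
    fun ws => ∑ T ∈ discarded ((fragments M W).filter (#· ≤ b)) bs ws, r ^ #T
  simp only [one_mul] at h
  rw [← h]
  refine expectRounds_mono hσ0 hσ1 fun ws _ => ?_
  rw [discarded, ← sum_union_inter]
  exact le_add_of_nonneg_right (sum_nonneg fun T _ => pow_nonneg hr _)

lemma expectRounds_sum_discarded_le {σ r : ℝ} (hσ0 : 0 < σ) (hσ1 : σ ≤ 1) (hr : 0 ≤ r)
    (hy : r * (1 - σ) / σ ≤ 1 / 8) (a : ℕ) (M : Finset (Finset X)) (hM : ∀ S ∈ M, #S ≤ a) :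
    expectRounds σ (halvings a).length (fun ws => ∑ T ∈ discarded M (halvings a) ws, r ^ #T) ≤
      budget a := by
  induction a using Nat.strong_induction_on generalizing M with
  | _ a ih =>
    rcases eq_or_ne a 0 with rfl | ha
    · simp [halvings, expectRounds, discarded, budget]
    set b := a / 2
    have hround : ∀ W, expectRounds σ (halvings b).length
        (fun ws => ∑ T ∈ discarded M (b :: halvings b) (W :: ws), r ^ #T) ≤
          ∑ T ∈ (fragments M W).filter (b < #·), r ^ #T + budget b := fun W =>
      (expectRounds_sum_discarded_cons_le hσ0.le hσ1 hr M b _ W).trans ((add_le_add_iff_left _).2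
        (ih b (Nat.div_lt_self (Nat.pos_of_ne_zero ha) one_lt_two) _
          fun S hS => (mem_filter.1 hS).2))
    have hlarge := sum_mu_mul_sum_large_fragments_le (b := b) hM hσ0 hσ1 hr
    have htail := sum_Icc_choose_mul_pow_add_budget_le
      (div_nonneg (mul_nonneg hr (sub_nonneg.2 hσ1)) hσ0.le) hy ha
    rw [halvings_of_ne_zero ha, List.length_cons]
    calc ∑ W, mu σ W * expectRounds σ (halvings b).length
          (fun ws => ∑ T ∈ discarded M (b :: halvings b) (W :: ws), r ^ #T)
        ≤ ∑ W, mu σ W * (∑ T ∈ (fragments M W).filter (b < #·), r ^ #T + budget b) :=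
          sum_le_sum fun W _ => mul_le_mul_of_nonneg_left (hround W) (mu_nonneg hσ0.le hσ1 W)
      _ = ∑ W, mu σ W * ∑ T ∈ (fragments M W).filter (b < #·), r ^ #T + budget b := by
          simp_rw [mul_add, sum_add_distrib, ← sum_mul, sum_mu_univ, one_mul]
      _ ≤ budget a := by linarith

section Threshold

variable {F : Finset (Finset X)}

lemma IsUpperFam.univ_mem (hup : IsUpperFam F) (hne : F ≠ ∅) : univ ∈ F := by
  obtain ⟨S, hS⟩ := nonempty_iff_ne_empty.2 hne
  exact hup S hS _ (subset_univ S)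

lemma IsUpperFam.empty_notMem (hup : IsUpperFam F) (hnt : F ≠ univ) : ∅ ∉ F := fun h =>
  hnt (eq_univ_iff_forall.2 fun S => hup ∅ h S (empty_subset S))

lemma one_le_ell0 (hempty : ∅ ∉ F) (huniv : univ ∈ F) : 1 ≤ ell0 F := by
  obtain ⟨S, hS, -⟩ := exists_mem_minimalsF_subset huniv
  have hSF : S ∈ F := (mem_filter.1 hS).1
  exact (card_pos.2 (nonempty_iff_ne_empty.2 fun h => hempty (h ▸ hSF))).trans_le
    (le_sup (f := card) hS)

lemma muF_ge_of_not_pSmall (hup : IsUpperFam F) (hk : ell0 F ≠ 0) {r : ℝ} (hr : 0 < r)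
    (hr8 : 8 * r ≤ 1) (hF : ¬ PSmall r F) :
    15 / 28 ≤ muF (1 - (1 - 8 * r) ^ (halvings (ell0 F)).length) F := by
  set bs := halvings (ell0 F)
  have hσ0 : 0 < 8 * r := by positivity
  have hpoint : ∀ ws : List (Finset X), ws.length = bs.length →
      1 + (-1) * (if ws.foldr (· ∪ ·) ∅ ∈ F then 1 else 0) ≤
        0 + 2 * ∑ T ∈ discarded (minimalsF F) bs ws, r ^ #T := fun ws hws => by
    have hw : 0 ≤ ∑ T ∈ discarded (minimalsF F) bs ws, r ^ #T :=
      sum_nonneg fun T _ => pow_nonneg hr.le _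
    split_ifs with hU
    · linarith
    · have := not_le.1 fun h => hF ⟨_, isCover_discarded hup hws (zero_mem_halvings hk) hU, h⟩
      linarith
  have hbudget := expectRounds_sum_discarded_le hσ0 hr8 hr.le
    (by rw [div_le_iff₀ hσ0]; nlinarith) (ell0 F) (minimalsF F) fun S hS => le_sup hS
  have hexpect := expectRounds_mono hσ0.le hr8 hpoint
  have hunion := expectRounds_union (8 * r) bs.length fun U => if U ∈ F then (1 : ℝ) else 0
  beta_reduce at hunion
  rw [expectRounds_affine, expectRounds_affine, hunion, sum_mu_mul_ite_mem] at hexpect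
  linarith [budget_le (ell0 F)]

lemma critical_le_of_not_pSmall (hup : IsUpperFam F) (hempty : ∅ ∉ F) (huniv : univ ∈ F)
    {pc : ℝ} (hpc : pc ≤ 1) (hcrit : muF pc F = 1 / 2) {r : ℝ} (hr : 0 < r) (hr8 : 8 * r ≤ 1)
    (hF : ¬ PSmall r F) : pc ≤ 8 * r * Real.logb 2 (2 * ell0 F) := by
  have hk := one_le_ell0 hempty huniv
  set m := (halvings (ell0 F)).length
  have hσ0 : 0 < 8 * r := by positivity
  have hpow : (1 - 8 * r) ^ m ≤ 1 := pow_le_one₀ (by linarith) (by linarith)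
  have hpcπ : pc ≤ 1 - (1 - 8 * r) ^ m := by
    by_contra! h
    have := muF_lt_muF_of_lt hup hempty huniv (by linarith) h hpc
    linarith [muF_ge_of_not_pSmall hup (by omega) hr hr8 hF]
  have hbernoulli := one_add_mul_le_pow (show -2 ≤ -(8 * r) by linarith) m
  rw [← sub_eq_add_neg] at hbernoulli
  have hm : (m : ℝ) ≤ Real.logb 2 (2 * ell0 F) := by
    rw [Real.le_logb_iff_rpow_le one_lt_two (by positivity), Real.rpow_natCast]
    exact_mod_cast two_pow_length_halvings_le (by omega)
  nlinarith [mul_le_mul_of_nonneg_left hm hσ0.le]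

lemma qThr_nonneg : 0 ≤ qThr F :=
  Real.sSup_nonneg fun _ hp => hp.1.1

lemma qThr_le_of_muF_eq (hup : IsUpperFam F) (hempty : ∅ ∉ F) (huniv : univ ∈ F) {pc : ℝ}
    (hpc : pc ∈ Set.Icc (0 : ℝ) 1) (hcrit : muF pc F = 1 / 2) : qThr F ≤ pc := by
  refine Real.sSup_le (fun p ⟨⟨hp0, hp1⟩, G, hG, hGsum⟩ => ?_) hpc.1
  by_contra! h
  have := muF_lt_muF_of_lt hup hempty huniv hpc.1 h hp1
  linarith [muF_le_sum_pow_of_isCover hp0 hp1 hG]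

lemma not_pSmall_of_qThr_lt {r : ℝ} (hr : qThr F < r) (hr1 : r ≤ 1) : ¬ PSmall r F := fun h =>
  hr.not_ge (le_csSup ⟨1, fun _ hp => hp.1.2⟩ ⟨⟨qThr_nonneg.trans hr.le, hr1⟩, h⟩)

end Threshold

theorem bell_park_pham_general (X : Type) [Fintype X] [DecidableEq X]
    (F : Finset (Finset X)) (hup : IsUpperFam F) (hne : F ≠ ∅) (hnt : F ≠ Finset.univ)
    (pc : ℝ) (hpc : pc ∈ Set.Icc (0 : ℝ) 1) (hcrit : muF pc F = 1 / 2) :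
    qThr F ≤ pc ∧ pc ≤ 8 * qThr F * Real.logb 2 (2 * (ell0 F : ℝ)) := by
  have huniv := hup.univ_mem hne
  have hempty := hup.empty_notMem hnt
  refine ⟨qThr_le_of_muF_eq hup hempty huniv hpc hcrit, ?_⟩
  set L := Real.logb 2 (2 * (ell0 F : ℝ))
  have hk : (1 : ℝ) ≤ ell0 F := by exact_mod_cast one_le_ell0 hempty huniv
  have hL : 1 ≤ L := by
    rw [Real.le_logb_iff_rpow_le one_lt_two (by linarith), Real.rpow_one]
    linarith
  have h8L : 0 < 8 * L := by linarith
  suffices pc / (8 * L) ≤ qThr F by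
    rw [div_le_iff₀ h8L] at this
    linarith
  refine le_of_forall_gt_imp_ge_of_dense fun r hr => ?_
  rw [div_le_iff₀ h8L]
  rcases le_or_gt 1 (8 * r) with h8 | h8
  · nlinarith [hpc.2]
  · have := critical_le_of_not_pSmall hup hempty huniv hpc.2 hcrit (qThr_nonneg.trans_lt hr)
      h8.le (not_pSmall_of_qThr_lt hr (by linarith))
    linarith

/-- **Bell's Park–Pham theorem with optimal constant.** For every nonempty finite set `X` and
every nontrivial upper set `F ⊆ 2^X`, `q(F) ≤ p_c(F) ≤ 8 · q(F) · log₂ (2 ℓ₀(F))`, where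
`p_c(F)` is the (unique) `p ∈ [0,1]` with `μ_p(F) = 1/2`. -/
theorem bell_park_pham (X : Type) [Fintype X] [DecidableEq X] [Nonempty X]
    (F : Finset (Finset X)) (hup : IsUpperFam F) (hne : F ≠ ∅) (hnt : F ≠ Finset.univ)
    (pc : ℝ) (hpc : pc ∈ Set.Icc (0 : ℝ) 1) (hcrit : muF pc F = 1 / 2) :
    qThr F ≤ pc ∧ pc ≤ 8 * qThr F * Real.logb 2 (2 * (ell0 F : ℝ)) :=
  bell_park_pham_general X F hup hne hnt pc hpc hcrit
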